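/- arXiv:2209.09826 — 5 statements merged into one kernel-verified Lean document; each statement's English description precedes it below -/
import Mathlib

section
/- For all real numbers x, y > 0 with x + y ≤ 1, it holds that 1 - (x - y)^2 / max{x, y} ≤ (√(x·y) + √((1-x)·(1-y)))^2 ≤ 1 - (x - y)^2. -/
/-!
Write `a = √(xy)`, `b = √((1-x)(1-y))`, so that the middle term is
`xy + (1-x)(1-y) + 2ab` with `ab = √(x(1-x)) √(y(1-y))`.
The upper bound is then AM-GM, `2ab ≤ x(1-x) + y(1-y)`.
For the lower bound take `y ≤ x`; after clearing the denominator it reads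
`y(3x - 2x² - y) ≤ 2x ab`, and comparing squares this follows from
`4x²·xy(1-x)(1-y) - y²(3x - 2x² - y)² = y(x-y)²(4x(1-x) - y)`,
where `y ≤ min x (1-x)` gives `4x(1-x) ≥ y`.
-/

open Real

lemma sq_sqrt_add_sqrt {a b : ℝ} (ha : 0 ≤ a) (hb : 0 ≤ b) :
    (√a + √b) ^ 2 = a + b + 2 * (√a * √b) := by
  rw [add_sq, sq_sqrt ha, sq_sqrt hb]; ring

lemma sq_sqrt_add_sqrt_le {x y : ℝ} (hx : 0 ≤ x) (hx1 : x ≤ 1) (hy : 0 ≤ y) (hy1 : y ≤ 1) :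
    (√(x * y) + √((1 - x) * (1 - y))) ^ 2 ≤ 1 - (x - y) ^ 2 := by
  have hp : 0 ≤ x * (1 - x) := mul_nonneg hx (by linarith)
  have hq : 0 ≤ y * (1 - y) := mul_nonneg hy (by linarith)
  have hab : √(x * y) * √((1 - x) * (1 - y)) = √(x * (1 - x)) * √(y * (1 - y)) := by
    rw [← sqrt_mul hp, ← sqrt_mul (by positivity)]; ring_nf
  have amgm := two_mul_le_add_sq (√(x * (1 - x))) (√(y * (1 - y)))
  rw [sq_sqrt hp, sq_sqrt hq] at amgm
  rw [sq_sqrt_add_sqrt (by positivity) (mul_nonneg (by linarith) (by linarith)), hab]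
  linarith

lemma mul_sub_le_two_mul_sqrt_mul_sqrt {x y : ℝ} (hy : 0 ≤ y) (hyx : y ≤ x) (hxy : x + y ≤ 1) :
    y * (3 * x - 2 * x ^ 2 - y) ≤ 2 * x * (√(x * y) * √((1 - x) * (1 - y))) := by
  have hx : 0 ≤ x := hy.trans hyx
  have hsq : (2 * x * (√(x * y) * √((1 - x) * (1 - y)))) ^ 2
      = 4 * x ^ 2 * (x * y) * ((1 - x) * (1 - y)) := by
    rw [mul_pow, mul_pow, mul_pow, sq_sqrt (by positivity),
      sq_sqrt (mul_nonneg (by linarith) (by linarith))]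
    ring
  have hdiff : 4 * x ^ 2 * (x * y) * ((1 - x) * (1 - y)) - (y * (3 * x - 2 * x ^ 2 - y)) ^ 2
      = y * ((x - y) ^ 2 * (4 * x * (1 - x) - y)) := by ring
  have h4 : y ≤ 4 * x * (1 - x) := by nlinarith
  have hnonneg : 0 ≤ y * ((x - y) ^ 2 * (4 * x * (1 - x) - y)) :=
    mul_nonneg hy (mul_nonneg (sq_nonneg _) (by linarith))
  refine (le_abs_self _).trans (abs_le_of_sq_le_sq ?_ (by positivity))
  linarith

lemma one_sub_sq_div_le_sq_sqrt_add_sqrt {x y : ℝ} (hx : 0 < x) (hy : 0 ≤ y) (hyx : y ≤ x)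
    (hxy : x + y ≤ 1) :
    1 - (x - y) ^ 2 / x ≤ (√(x * y) + √((1 - x) * (1 - y))) ^ 2 := by
  have key := mul_sub_le_two_mul_sqrt_mul_sqrt hy hyx hxy
  rw [sq_sqrt_add_sqrt (by positivity) (mul_nonneg (by linarith) (by linarith)),
    sub_le_iff_le_add, ← sub_le_iff_le_add', le_div_iff₀ hx]
  linarith

/-- Lemma A.1: two-sided estimate for the single-mode fidelity expression. -/
theorem fidelity_two_sided_bound (x y : ℝ) (hx : 0 < x) (hy : 0 < y) (hxy : x + y ≤ 1) :
    1 - (x - y) ^ 2 / max x y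
      ≤ (Real.sqrt (x * y) + Real.sqrt ((1 - x) * (1 - y))) ^ 2 ∧
    (Real.sqrt (x * y) + Real.sqrt ((1 - x) * (1 - y))) ^ 2
      ≤ 1 - (x - y) ^ 2 := by
  refine ⟨?_, sq_sqrt_add_sqrt_le hx.le (by linarith) hy.le (by linarith)⟩
  rcases le_total y x with hyx | hx_le_y
  · rw [max_eq_left hyx]
    exact one_sub_sq_div_le_sq_sqrt_add_sqrt hx hy.le hyx hxy
  · rw [max_eq_right hx_le_y, sub_sq_comm, mul_comm x, mul_comm (1 - x)]
    exact one_sub_sq_div_le_sq_sqrt_add_sqrt hy hx.le hx_le_y (by linarith)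
end

section
/- Let L be a natural number, let ν be a real number with ν > 0, and let λ : Fin L → ℝ satisfy 0 ≤ λ j and λ j + ν ≤ 1 for all j. Then ∏_{j} (√(ν·λ j) + √((1-ν)·(1-λ j)))^2 ≥ 1 - (1/ν)·∑_{j} (λ j - ν)^2. -/
/-!
Writing `ν = sin² α` and `λ = sin² β` with `α, β ∈ [0, π/2]`, the Bernoulli fidelity is
`cos² (α - β)`, while `λ - ν = sin (β - α) sin (β + α)`. Hence
`ν (1 - F) = sin² α sin² (β - α) ≤ sin² (β + α) sin² (β - α) = (λ - ν)²`,
because `λ + ν ≤ 1` means `α ≤ α + β ≤ π/2`. Below this is done without angles, for the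
unit vectors `(p, q) = (sin α, cos α)` and `(y, z) = (sin β, cos β)`. The single-site losses
`1 - F` then add up through the Weierstrass product inequality `∏ (1 - xⱼ) ≥ 1 - ∑ xⱼ`.
-/

open Real Finset

theorem Finset.one_sub_sum_le_prod_one_sub {ι R : Type*} [CommRing R] [PartialOrder R]
    [IsOrderedRing R] (s : Finset ι) (x : ι → R) (h0 : ∀ i ∈ s, 0 ≤ x i)
    (h1 : ∀ i ∈ s, x i ≤ 1) :
    1 - ∑ i ∈ s, x i ≤ ∏ i ∈ s, (1 - x i) := by
  induction s using Finset.cons_induction with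
  | empty => simp
  | cons i s _ ih =>
    rw [sum_cons, prod_cons]
    have hxi : 0 ≤ x i := h0 i (mem_cons_self i s)
    have hsum : 0 ≤ ∑ j ∈ s, x j := sum_nonneg fun j hj => h0 j (mem_cons_of_mem hj)
    have hprod : 1 - ∑ j ∈ s, x j ≤ ∏ j ∈ s, (1 - x j) :=
      ih (fun j hj => h0 j (mem_cons_of_mem hj)) (fun j hj => h1 j (mem_cons_of_mem hj))
    calc 1 - (x i + ∑ j ∈ s, x j)
        ≤ 1 - (x i + ∑ j ∈ s, x j) + x i * ∑ j ∈ s, x j :=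
          le_add_of_nonneg_right (mul_nonneg hxi hsum)
      _ = (1 - x i) * (1 - ∑ j ∈ s, x j) := by ring
      _ ≤ (1 - x i) * ∏ j ∈ s, (1 - x j) :=
        mul_le_mul_of_nonneg_left hprod (sub_nonneg.2 (h1 i (mem_cons_self i s)))

section UnitVectors

variable {p q y z : ℝ}

theorem one_sub_sq_mul_add_mul (hpq : p ^ 2 + q ^ 2 = 1) (hyz : y ^ 2 + z ^ 2 = 1) :
    1 - (p * y + q * z) ^ 2 = (p * z - q * y) ^ 2 := by
  linear_combination (-(y ^ 2 + z ^ 2)) * hpq - hyz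

theorem sq_le_sq_mul_add_mul (hp : 0 ≤ p) (hy : 0 ≤ y) (hz : 0 ≤ z)
    (hpq : p ^ 2 + q ^ 2 = 1) (hyz : y ^ 2 + z ^ 2 = 1) (hyq : y ≤ q) :
    p ^ 2 ≤ (q * y + p * z) ^ 2 := by
  -- `(q y + p z, q z - p y)` is a unit vector whose second coordinate lies in `[0, q]`.
  have hq : 0 ≤ q := hy.trans hyq
  have hpz : p ≤ z := (sq_le_sq₀ hp hz).1 (by nlinarith)
  have hz1 : z ≤ 1 := (sq_le_one_iff₀ hz).1 (by nlinarith)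
  have hcross_nonneg : 0 ≤ q * z - p * y := by nlinarith [mul_le_mul hyq hpz hp hq]
  have hcross_le : q * z - p * y ≤ q := by nlinarith [mul_nonneg hp hy]
  have hcross_sq : (q * z - p * y) ^ 2 ≤ q ^ 2 := pow_le_pow_left₀ hcross_nonneg hcross_le 2
  have hrot : 1 - (q * y + p * z) ^ 2 = (q * z - p * y) ^ 2 :=
    one_sub_sq_mul_add_mul (by linarith) hyz
  linarith

theorem sq_mul_one_sub_sq_mul_add_mul_le (hp : 0 ≤ p) (hy : 0 ≤ y) (hz : 0 ≤ z)
    (hpq : p ^ 2 + q ^ 2 = 1) (hyz : y ^ 2 + z ^ 2 = 1) (hyq : y ≤ q) :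
    p ^ 2 * (1 - (p * y + q * z) ^ 2) ≤ (y ^ 2 - p ^ 2) ^ 2 := by
  have hdiff : y ^ 2 - p ^ 2 = (q * y + p * z) * (q * y - p * z) := by
    linear_combination p ^ 2 * hyz - y ^ 2 * hpq
  rw [one_sub_sq_mul_add_mul hpq hyz, hdiff, mul_pow, ← neg_sub, neg_sq]
  exact mul_le_mul_of_nonneg_right (sq_le_sq_mul_add_mul hp hy hz hpq hyz hyq) (sq_nonneg _)

end UnitVectors

noncomputable def bernoulliFidelity (ν l : ℝ) : ℝ :=
  (√(ν * l) + √((1 - ν) * (1 - l))) ^ 2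

section BernoulliFidelity

variable {ν l : ℝ}

theorem bernoulliFidelity_eq (hν : 0 ≤ ν) (hν1 : ν ≤ 1) :
    bernoulliFidelity ν l = (√ν * √l + √(1 - ν) * √(1 - l)) ^ 2 := by
  rw [bernoulliFidelity, sqrt_mul hν, sqrt_mul (sub_nonneg.2 hν1)]

theorem bernoulliFidelity_nonneg : 0 ≤ bernoulliFidelity ν l := sq_nonneg _

theorem bernoulliFidelity_le_one (hν : 0 ≤ ν) (hν1 : ν ≤ 1) (hl : 0 ≤ l) (hl1 : l ≤ 1) :
    bernoulliFidelity ν l ≤ 1 := by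
  have hrot := one_sub_sq_mul_add_mul (p := √ν) (q := √(1 - ν)) (y := √l) (z := √(1 - l))
    (by rw [sq_sqrt hν, sq_sqrt (by linarith)]; ring)
    (by rw [sq_sqrt hl, sq_sqrt (by linarith)]; ring)
  rw [bernoulliFidelity_eq hν hν1, ← sub_nonneg, hrot]
  exact sq_nonneg _

theorem mul_one_sub_bernoulliFidelity_le (hν : 0 ≤ ν) (hl : 0 ≤ l) (hlν : l + ν ≤ 1) :
    ν * (1 - bernoulliFidelity ν l) ≤ (l - ν) ^ 2 := by
  have key := sq_mul_one_sub_sq_mul_add_mul_le (p := √ν) (q := √(1 - ν)) (y := √l)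
    (z := √(1 - l)) (sqrt_nonneg _) (sqrt_nonneg _) (sqrt_nonneg _)
    (by rw [sq_sqrt hν, sq_sqrt (by linarith)]; ring)
    (by rw [sq_sqrt hl, sq_sqrt (by linarith)]; ring)
    (sqrt_le_sqrt (by linarith))
  rwa [sq_sqrt hν, sq_sqrt hl, ← bernoulliFidelity_eq hν (by linarith)] at key

end BernoulliFidelity

/-- Deterministic core of eigenstate thermalization: F ≥ 1 - M/ν. -/
theorem fidelity_lower_bound (L : ℕ) (ν : ℝ) (hν : 0 < ν) (lam : Fin L → ℝ)
    (hlam0 : ∀ j, 0 ≤ lam j) (hlam1 : ∀ j, lam j + ν ≤ 1) :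
    ∏ j, (Real.sqrt (ν * lam j) + Real.sqrt ((1 - ν) * (1 - lam j))) ^ 2
      ≥ 1 - (1 / ν) * ∑ j, (lam j - ν) ^ 2 := by
  have hle_one : ∀ j, bernoulliFidelity ν (lam j) ≤ 1 := fun j =>
    bernoulliFidelity_le_one hν.le (by linarith [hlam0 j, hlam1 j]) (hlam0 j)
      (by linarith [hlam1 j])
  have hloss : ∀ j, 1 - bernoulliFidelity ν (lam j) ≤ 1 / ν * (lam j - ν) ^ 2 := fun j => by
    rw [one_div, ← div_eq_inv_mul, le_div_iff₀' hν]
    exact mul_one_sub_bernoulliFidelity_le hν.le (hlam0 j) (hlam1 j)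
  calc 1 - 1 / ν * ∑ j, (lam j - ν) ^ 2
      ≤ 1 - ∑ j, (1 - bernoulliFidelity ν (lam j)) := by
        rw [mul_sum]
        exact sub_le_sub_left (sum_le_sum fun j _ => hloss j) 1
    _ ≤ ∏ j, (1 - (1 - bernoulliFidelity ν (lam j))) :=
        one_sub_sum_le_prod_one_sub _ _ (fun j _ => sub_nonneg.2 (hle_one j))
          (fun j _ => sub_le_self _ bernoulliFidelity_nonneg)
    _ = ∏ j, bernoulliFidelity ν (lam j) := by simp only [sub_sub_cancel]
end

section
/- Let L be a natural number, let ν be a real number with 0 ≤ ν, and let λ : Fin L → ℝ satisfy 0 ≤ λ j and λ j + ν ≤ 1 for all j. Then ∏_{j} (√(ν·λ j) + √((1-ν)·(1-λ j)))^2 ≤ exp(-∑_{j} (λ j - ν)^2). -/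
/-!
Write each factor as `(a c + b d)²` for the unit vectors `(a, b) = (√ν, √(1-ν))` and
`(c, d) = (√λ, √(1-λ))`. Lagrange's identity gives `(a c + b d)² = 1 - (a d - b c)²`, and
since `(a d - b c)(a d + b c) = a² - c² = ν - λ` with `(a d + b c)² ≤ 1`, each factor is at
most `1 - (λ - ν)² ≤ exp (-(λ - ν)²)`.
-/

open Finset

theorem sq_mul_add_mul_le_one_sub_sq {a b c d : ℝ} (hab : a ^ 2 + b ^ 2 = 1)
    (hcd : c ^ 2 + d ^ 2 = 1) : (a * c + b * d) ^ 2 ≤ 1 - (c ^ 2 - a ^ 2) ^ 2 := by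
  have lagrange : (a * c + b * d) ^ 2 + (a * d - b * c) ^ 2 = 1 := by
    linear_combination (c ^ 2 + d ^ 2) * hab + hcd
  have cross_le_one : (a * d + b * c) ^ 2 ≤ 1 := by
    nlinarith [sq_nonneg (a * c - b * d)]
  have difference_of_squares : (a * d - b * c) ^ 2 * (a * d + b * c) ^ 2 = (c ^ 2 - a ^ 2) ^ 2 := by
    have h : a ^ 2 * d ^ 2 - b ^ 2 * c ^ 2 = a ^ 2 - c ^ 2 := by
      linear_combination a ^ 2 * hcd - c ^ 2 * hab
    linear_combination (a ^ 2 * d ^ 2 - b ^ 2 * c ^ 2 + a ^ 2 - c ^ 2) * h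
  linarith [mul_le_mul_of_nonneg_left cross_le_one (sq_nonneg (a * d - b * c))]

theorem sq_sqrt_mul_add_sqrt_one_sub_mul_le {p q : ℝ} (hp0 : 0 ≤ p) (hp1 : p ≤ 1)
    (hq0 : 0 ≤ q) (hq1 : q ≤ 1) :
    (Real.sqrt (p * q) + Real.sqrt ((1 - p) * (1 - q))) ^ 2 ≤ 1 - (q - p) ^ 2 := by
  have on_unit_circle {x : ℝ} (hx0 : 0 ≤ x) (hx1 : x ≤ 1) :
      √x ^ 2 + √(1 - x) ^ 2 = 1 := by
    rw [Real.sq_sqrt hx0, Real.sq_sqrt (sub_nonneg.2 hx1)]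
    ring
  have h := sq_mul_add_mul_le_one_sub_sq (on_unit_circle hp0 hp1) (on_unit_circle hq0 hq1)
  rwa [Real.sq_sqrt hp0, Real.sq_sqrt hq0, ← Real.sqrt_mul hp0,
    ← Real.sqrt_mul (sub_nonneg.2 hp1)] at h

/-- Deterministic core of the failure of the ETH: F ≤ exp(-M). -/
theorem fidelity_upper_bound (L : ℕ) (ν : ℝ) (hν : 0 ≤ ν) (lam : Fin L → ℝ)
    (hlam0 : ∀ j, 0 ≤ lam j) (hlam1 : ∀ j, lam j + ν ≤ 1) :
    ∏ j, (Real.sqrt (ν * lam j) + Real.sqrt ((1 - ν) * (1 - lam j))) ^ 2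
      ≤ Real.exp (-∑ j, (lam j - ν) ^ 2) := by
  have factor_le (j : Fin L) :
      (Real.sqrt (ν * lam j) + Real.sqrt ((1 - ν) * (1 - lam j))) ^ 2
        ≤ Real.exp (-(lam j - ν) ^ 2) :=
    (sq_sqrt_mul_add_sqrt_one_sub_mul_le hν (by linarith [hlam0 j, hlam1 j]) (hlam0 j)
      (by linarith [hlam1 j])).trans (Real.one_sub_le_exp_neg _)
  calc _ ≤ ∏ j, Real.exp (-(lam j - ν) ^ 2) :=
        prod_le_prod (fun _ _ => by positivity) fun j _ => factor_le j
    _ = Real.exp (-∑ j, (lam j - ν) ^ 2) := by rw [← Real.exp_sum, sum_neg_distrib]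
end

section
/- Let L be a natural number, ν ∈ ℝ with ν > 0, and λ : Fin L → ℝ with 0 ≤ λ j and λ j + ν ≤ 1 for all j. For s : Fin L → Bool define P_λ(s) := ∏_j (if s j = true then λ j else 1 - λ j) and P_ν(s) := ∏_j (if s j = true then ν else 1 - ν). Then (1/2) · ∑_{s : Fin L → Bool} |P_λ(s) - P_ν(s)| ≤ √( (1/ν) · ∑_j (λ j - ν)^2 ). -/
/-!
Cauchy–Schwarz applied to `|P - Q| = |√P - √Q| (√P + √Q)` bounds half the `ℓ¹` distance of two
probability vectors by `√(1 - B²)`, where `B = ∑ √(P Q)` is the Bhattacharyya coefficient (`B²` is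
the fidelity): this is the Fuchs–van de Graaf inequality. `B` is multiplicative over product
distributions, and the Weierstrass product inequality `1 - ∏ cⱼ ≤ ∑ (1 - cⱼ)` reduces the bound to a
single Bernoulli factor, where `1 - B² = (√(λ(1-ν)) - √(ν(1-λ)))²`; multiplying by
`(√(λ(1-ν)) + √(ν(1-λ)))² ≥ ν` gives `1 - B² ≤ (λ - ν)² / ν`.
-/

open Finset

theorem Finset.one_sub_prod_le_sum_one_sub {ι : Type*} (s : Finset ι) {c : ι → ℝ}
    (h0 : ∀ i ∈ s, 0 ≤ c i) (h1 : ∀ i ∈ s, c i ≤ 1) :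
    1 - ∏ i ∈ s, c i ≤ ∑ i ∈ s, (1 - c i) := by
  induction s using Finset.cons_induction with
  | empty => simp
  | cons a s ha ih =>
    simp only [mem_cons, forall_eq_or_imp] at h0 h1
    rw [prod_cons, sum_cons]
    have hprod : ∏ i ∈ s, c i ≤ 1 := prod_le_one h0.2 h1.2
    nlinarith [ih h0.2 h1.2, mul_nonneg (sub_nonneg.2 h1.1) (sub_nonneg.2 hprod)]

section Bhattacharyya

variable {α : Type*} [Fintype α]

noncomputable def bhattacharyya (P Q : α → ℝ) : ℝ := ∑ a, √(P a * Q a)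

variable {P Q : α → ℝ}

lemma sum_sqrt_sub_sqrt_sq (hP : ∀ a, 0 ≤ P a) (hQ : ∀ a, 0 ≤ Q a) :
    ∑ a, (√(P a) - √(Q a)) ^ 2 = ∑ a, P a + ∑ a, Q a - 2 * bhattacharyya P Q := by
  rw [bhattacharyya, mul_sum, ← sum_add_distrib, ← sum_sub_distrib]
  refine sum_congr rfl fun a _ => ?_
  rw [sub_sq, Real.sq_sqrt (hP a), Real.sq_sqrt (hQ a), Real.sqrt_mul (hP a)]
  ring

lemma sum_sqrt_add_sqrt_sq (hP : ∀ a, 0 ≤ P a) (hQ : ∀ a, 0 ≤ Q a) :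
    ∑ a, (√(P a) + √(Q a)) ^ 2 = ∑ a, P a + ∑ a, Q a + 2 * bhattacharyya P Q := by
  rw [bhattacharyya, mul_sum, ← sum_add_distrib, ← sum_add_distrib]
  refine sum_congr rfl fun a _ => ?_
  rw [add_sq, Real.sq_sqrt (hP a), Real.sq_sqrt (hQ a), Real.sqrt_mul (hP a)]
  ring

lemma sq_sum_abs_sub_le (hP : ∀ a, 0 ≤ P a) (hQ : ∀ a, 0 ≤ Q a) :
    (∑ a, |P a - Q a|) ^ 2
      ≤ (∑ a, (√(P a) - √(Q a)) ^ 2) * ∑ a, (√(P a) + √(Q a)) ^ 2 := by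
  have hfactor : ∀ a, |P a - Q a| = |√(P a) - √(Q a)| * (√(P a) + √(Q a)) := fun a => by
    rw [← abs_of_nonneg (by positivity : 0 ≤ √(P a) + √(Q a)), ← abs_mul]
    congr 1
    linear_combination Real.sq_sqrt (hQ a) - Real.sq_sqrt (hP a)
  simp_rw [hfactor]
  simpa only [sq_abs] using sum_mul_sq_le_sq_mul_sq univ
    (fun a => |√(P a) - √(Q a)|) (fun a => √(P a) + √(Q a))

theorem half_sum_abs_sub_le_sqrt_one_sub_bhattacharyya_sq (hP : ∀ a, 0 ≤ P a)
    (hQ : ∀ a, 0 ≤ Q a) (hP1 : ∑ a, P a = 1) (hQ1 : ∑ a, Q a = 1) :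
    (1 / 2) * ∑ a, |P a - Q a| ≤ √(1 - bhattacharyya P Q ^ 2) := by
  have h := sq_sum_abs_sub_le hP hQ
  rw [sum_sqrt_sub_sqrt_sq hP hQ, sum_sqrt_add_sqrt_sq hP hQ, hP1, hQ1] at h
  refine Real.le_sqrt_of_sq_le ?_
  nlinarith

theorem bhattacharyya_pi {ι β : Type*} [Fintype ι] [DecidableEq ι] [Fintype β]
    {p q : ι → β → ℝ} (hp : ∀ i b, 0 ≤ p i b) (hq : ∀ i b, 0 ≤ q i b) :
    bhattacharyya (fun s : ι → β => ∏ i, p i (s i)) (fun s => ∏ i, q i (s i))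
      = ∏ i, bhattacharyya (p i) (q i) := by
  simp only [bhattacharyya, Fintype.prod_sum, ← prod_mul_distrib]
  exact sum_congr rfl fun s _ =>
    Real.sqrt_prod _ fun i _ => mul_nonneg (hp i (s i)) (hq i (s i))

end Bhattacharyya

section Bernoulli

def bernoulliMass (p : ℝ) : Bool → ℝ := fun b => if b then p else 1 - p

lemma sum_bernoulliMass (p : ℝ) : ∑ b, bernoulliMass p b = 1 := by
  simp [bernoulliMass]

lemma sum_prod_bernoulliMass {ι : Type*} [Fintype ι] [DecidableEq ι] (p : ι → ℝ) :
    ∑ s : ι → Bool, ∏ i, bernoulliMass (p i) (s i) = 1 := by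
  rw [← Fintype.prod_sum]
  simp only [sum_bernoulliMass, prod_const_one]

lemma bernoulliMass_nonneg {p : ℝ} (h0 : 0 ≤ p) (h1 : p ≤ 1) (b : Bool) :
    0 ≤ bernoulliMass p b := by
  cases b <;> simp [bernoulliMass] <;> linarith

variable {l ν : ℝ}

lemma one_sub_bhattacharyya_bernoulliMass_sq (hl0 : 0 ≤ l) (hl1 : l ≤ 1) (hν0 : 0 ≤ ν)
    (hν1 : ν ≤ 1) :
    1 - bhattacharyya (bernoulliMass l) (bernoulliMass ν) ^ 2
      = (√(l * (1 - ν)) - √(ν * (1 - l))) ^ 2 := by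
  have hcross : √(l * ν) * √((1 - l) * (1 - ν)) = √(l * (1 - ν)) * √(ν * (1 - l)) := by
    rw [← Real.sqrt_mul (by positivity), ← Real.sqrt_mul (by nlinarith)]
    ring_nf
  simp only [bhattacharyya, bernoulliMass, Fintype.sum_bool, if_true, Bool.false_eq_true,
    if_false]
  rw [add_sq, sub_sq, Real.sq_sqrt (by positivity), Real.sq_sqrt (by nlinarith),
    Real.sq_sqrt (by nlinarith), Real.sq_sqrt (by nlinarith), mul_assoc 2, hcross]
  ring

lemma bhattacharyya_bernoulliMass_sq_le_one (hl0 : 0 ≤ l) (hl1 : l ≤ 1) (hν0 : 0 ≤ ν)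
    (hν1 : ν ≤ 1) : bhattacharyya (bernoulliMass l) (bernoulliMass ν) ^ 2 ≤ 1 := by
  rw [← sub_nonneg, one_sub_bhattacharyya_bernoulliMass_sq hl0 hl1 hν0 hν1]
  positivity

lemma one_sub_bhattacharyya_bernoulliMass_sq_le (hν : 0 < ν) (hl : 0 ≤ l) (hlν : l + ν ≤ 1) :
    1 - bhattacharyya (bernoulliMass l) (bernoulliMass ν) ^ 2 ≤ (l - ν) ^ 2 / ν := by
  rw [one_sub_bhattacharyya_bernoulliMass_sq hl (by linarith) hν.le (by linarith),
    le_div_iff₀ hν]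
  set u := √(l * (1 - ν))
  set v := √(ν * (1 - l))
  have hu2 : u ^ 2 = l * (1 - ν) := Real.sq_sqrt (by nlinarith)
  have hv2 : v ^ 2 = ν * (1 - l) := Real.sq_sqrt (by nlinarith)
  have hlu : l ≤ u := (Real.le_sqrt hl (by nlinarith)).2 (by nlinarith)
  have hνv : ν ≤ v := (Real.le_sqrt hν.le (by nlinarith)).2 (by nlinarith)
  have hν_le : ν ≤ (u + v) ^ 2 := by nlinarith [mul_le_mul hlu hνv hν.le (hl.trans hlu)]
  calc (u - v) ^ 2 * ν ≤ (u - v) ^ 2 * (u + v) ^ 2 := by gcongr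
    _ = (u ^ 2 - v ^ 2) ^ 2 := by ring
    _ = (l - ν) ^ 2 := by rw [hu2, hv2]; ring

end Bernoulli

/-- Trace distance between the Bernoulli product distributions is at most
√(M/ν), where M = ∑ (λ_j - ν)². -/
theorem tv_dist_upper_bound (L : ℕ) (ν : ℝ) (hν : 0 < ν) (lam : Fin L → ℝ)
    (hlam0 : ∀ j, 0 ≤ lam j) (hlam1 : ∀ j, lam j + ν ≤ 1) :
    (1 / 2 : ℝ) * ∑ s : Fin L → Bool,
        |(∏ j, if s j = true then lam j else 1 - lam j)
          - ∏ j, if s j = true then ν else 1 - ν|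
      ≤ Real.sqrt ((1 / ν) * ∑ j, (lam j - ν) ^ 2) := by
  have hlam_le : ∀ j, lam j ≤ 1 := fun j => by linarith [hlam1 j]
  have hν_le : ∀ j : Fin L, ν ≤ 1 := fun j => by linarith [hlam0 j, hlam1 j]
  have hp : ∀ j b, 0 ≤ bernoulliMass (lam j) b := fun j =>
    bernoulliMass_nonneg (hlam0 j) (hlam_le j)
  have hq : ∀ (j : Fin L) b, 0 ≤ bernoulliMass ν b := fun j => bernoulliMass_nonneg hν.le (hν_le j)
  set B : Fin L → ℝ := fun j => bhattacharyya (bernoulliMass (lam j)) (bernoulliMass ν)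
  calc (1 / 2 : ℝ) * ∑ s : Fin L → Bool,
        |∏ j, bernoulliMass (lam j) (s j) - ∏ j, bernoulliMass ν (s j)|
      ≤ √(1 - bhattacharyya (fun s : Fin L → Bool => ∏ j, bernoulliMass (lam j) (s j))
          (fun s => ∏ j, bernoulliMass ν (s j)) ^ 2) :=
        half_sum_abs_sub_le_sqrt_one_sub_bhattacharyya_sq
          (fun s => prod_nonneg fun j _ => hp j (s j)) (fun s => prod_nonneg fun j _ => hq j (s j))
          (sum_prod_bernoulliMass lam) (sum_prod_bernoulliMass fun _ => ν)
    _ = √(1 - ∏ j, B j ^ 2) := by rw [bhattacharyya_pi hp hq, prod_pow]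
    _ ≤ √(∑ j, (1 - B j ^ 2)) :=
        Real.sqrt_le_sqrt (one_sub_prod_le_sum_one_sub _ (fun j _ => sq_nonneg _) fun j _ =>
          bhattacharyya_bernoulliMass_sq_le_one (hlam0 j) (hlam_le j) hν.le (hν_le j))
    _ ≤ √(∑ j, (lam j - ν) ^ 2 / ν) := Real.sqrt_le_sqrt (sum_le_sum fun j _ =>
        one_sub_bhattacharyya_bernoulliMass_sq_le hν (hlam0 j) (hlam1 j))
    _ = √((1 / ν) * ∑ j, (lam j - ν) ^ 2) := by rw [one_div, mul_sum]; simp only [div_eq_inv_mul]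
end

section
/- Let L be a natural number, ν ∈ ℝ with 0 ≤ ν, and λ : Fin L → ℝ with 0 ≤ λ j and λ j + ν ≤ 1 for all j. For s : Fin L → Bool define P_λ(s) := ∏_j (if s j = true then λ j else 1 - λ j) and P_ν(s) := ∏_j (if s j = true then ν else 1 - ν). Then (1/2) · ∑_{s : Fin L → Bool} |P_λ(s) - P_ν(s)| ≥ 1 - exp( -(1/2) · ∑_j (λ j - ν)^2 ). -/
/-!
The total variation distance of two probability vectors is `1 - ∑ min (p s) (q s)`, and
`min (p s) (q s) ≤ √(p s * q s)`, so it is at least one minus the Bhattacharyya coefficient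
`∑ √(p s * q s)`. For product distributions this coefficient factorises over the sites, and for a
single pair of Bernoulli distributions with parameters `a`, `b` it satisfies `BC² + (a - b)² ≤ 1`,
whence `BC ≤ 1 - (a - b)² / 2 ≤ exp (-(a - b)² / 2)`.
-/

open Finset Real

lemma min_le_sqrt_mul (a b : ℝ) : min a b ≤ √(a * b) := by
  rcases lt_or_ge (min a b) 0 with hneg | hnonneg
  · exact hneg.le.trans (sqrt_nonneg _)
  · obtain ⟨ha, hb⟩ := le_min_iff.mp hnonneg
    rw [le_sqrt hnonneg (mul_nonneg ha hb), sq]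
    exact mul_le_mul (min_le_left a b) (min_le_right a b) hnonneg ha

lemma abs_sub_eq_add_sub_two_mul_min (a b : ℝ) : |a - b| = a + b - 2 * min a b := by
  rw [← max_sub_min_eq_abs', ← min_add_max a b]
  ring

lemma half_sum_abs_sub_eq_one_sub_sum_min {ι : Type*} [Fintype ι] {p q : ι → ℝ}
    (hp : ∑ i, p i = 1) (hq : ∑ i, q i = 1) :
    1 / 2 * ∑ i, |p i - q i| = 1 - ∑ i, min (p i) (q i) := by
  simp only [abs_sub_eq_add_sub_two_mul_min, sum_sub_distrib, sum_add_distrib, ← mul_sum, hp, hq]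
  ring

lemma sum_sqrt_prod_mul_prod {ι α : Type*} [Fintype ι] [DecidableEq ι] [Fintype α]
    (f g : ι → α → ℝ) (hfg : ∀ i a, 0 ≤ f i a * g i a) :
    ∑ s : ι → α, √((∏ i, f i (s i)) * ∏ i, g i (s i)) = ∏ i, ∑ a, √(f i a * g i a) := by
  rw [Fintype.prod_sum]
  refine sum_congr rfl fun s _ => ?_
  rw [← prod_mul_distrib, sqrt_prod _ fun i _ => hfg i (s i)]

lemma sq_mul_add_mul_add_sq_sq_sub_sq_le_one {x y z w : ℝ}
    (hxz : x ^ 2 + z ^ 2 = 1) (hyw : y ^ 2 + w ^ 2 = 1) :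
    (x * y + z * w) ^ 2 + (x ^ 2 - y ^ 2) ^ 2 ≤ 1 := by
  have lagrange : (x * y + z * w) ^ 2 + (x * w - z * y) ^ 2 = 1 := by
    linear_combination (y ^ 2 + w ^ 2) * hxz + hyw
  have cauchy_schwarz : (x * w + z * y) ^ 2 ≤ 1 := by
    nlinarith [sq_nonneg (x * y - z * w)]
  have factor : x ^ 2 - y ^ 2 = (x * w - z * y) * (x * w + z * y) := by
    linear_combination y ^ 2 * hxz - x ^ 2 * hyw
  rw [factor, mul_pow]
  nlinarith [sq_nonneg (x * w - z * y)]

def bernoulliWeight (a : ℝ) (b : Bool) : ℝ := if b = true then a else 1 - a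

lemma sum_prod_bernoulliWeight {ι : Type*} [Fintype ι] [DecidableEq ι] (μ : ι → ℝ) :
    ∑ s : ι → Bool, ∏ i, bernoulliWeight (μ i) (s i) = 1 := by
  rw [← Fintype.prod_sum]
  simp [bernoulliWeight]

lemma bernoulliWeight_nonneg {a : ℝ} (h0 : 0 ≤ a) (h1 : a ≤ 1) (b : Bool) :
    0 ≤ bernoulliWeight a b := by
  cases b <;> simp [bernoulliWeight, h0, h1]

lemma sum_sqrt_bernoulliWeight_mul_le {a b : ℝ} (ha0 : 0 ≤ a) (ha1 : a ≤ 1)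
    (hb0 : 0 ≤ b) (hb1 : b ≤ 1) :
    ∑ c, √(bernoulliWeight a c * bernoulliWeight b c) ≤ exp (-(a - b) ^ 2 / 2) := by
  set bc := √a * √b + √(1 - a) * √(1 - b)
  have hbc_nonneg : 0 ≤ bc := by positivity
  have hbc_sq : bc ^ 2 + (a - b) ^ 2 ≤ 1 := by
    have := sq_mul_add_mul_add_sq_sq_sub_sq_le_one (x := √a) (y := √b) (z := √(1 - a))
      (w := √(1 - b)) (by simp [sq_sqrt ha0, sq_sqrt (sub_nonneg.2 ha1)])
      (by simp [sq_sqrt hb0, sq_sqrt (sub_nonneg.2 hb1)])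
    rwa [sq_sqrt ha0, sq_sqrt hb0] at this
  calc ∑ c, √(bernoulliWeight a c * bernoulliWeight b c) = bc := by
        simp [bernoulliWeight, sqrt_mul ha0, sqrt_mul (sub_nonneg.2 ha1), bc]
    _ ≤ 1 - (a - b) ^ 2 / 2 := by nlinarith [sq_nonneg (a - b)]
    _ ≤ exp (-(a - b) ^ 2 / 2) := by linarith [add_one_le_exp (-(a - b) ^ 2 / 2)]

/-- Trace distance between the Bernoulli product distributions is at least
1 - exp(-M/2), where M = ∑ (λ_j - ν)². -/
theorem tv_dist_lower_bound (L : ℕ) (ν : ℝ) (hν : 0 ≤ ν) (lam : Fin L → ℝ)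
    (hlam0 : ∀ j, 0 ≤ lam j) (hlam1 : ∀ j, lam j + ν ≤ 1) :
    (1 / 2 : ℝ) * ∑ s : Fin L → Bool,
        |(∏ j, if s j = true then lam j else 1 - lam j)
          - ∏ j, if s j = true then ν else 1 - ν|
      ≥ 1 - Real.exp (-(1 / 2) * ∑ j, (lam j - ν) ^ 2) := by
  have hlam_le (j : Fin L) : lam j ≤ 1 := by linarith [hlam1 j]
  have hν_le (j : Fin L) : ν ≤ 1 := by linarith [hlam1 j, hlam0 j]
  change 1 / 2 * ∑ s : Fin L → Bool,
      |(∏ j, bernoulliWeight (lam j) (s j)) - ∏ j, bernoulliWeight ν (s j)| ≥ _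
  rw [half_sum_abs_sub_eq_one_sub_sum_min (sum_prod_bernoulliWeight lam)
    (sum_prod_bernoulliWeight fun _ => ν)]
  suffices h : ∑ s : Fin L → Bool, min (∏ j, bernoulliWeight (lam j) (s j))
      (∏ j, bernoulliWeight ν (s j)) ≤ exp (-(1 / 2) * ∑ j, (lam j - ν) ^ 2) by linarith
  calc _ ≤ ∑ s : Fin L → Bool, √((∏ j, bernoulliWeight (lam j) (s j)) *
          ∏ j, bernoulliWeight ν (s j)) := sum_le_sum fun s _ => min_le_sqrt_mul _ _
    _ = ∏ j, ∑ c, √(bernoulliWeight (lam j) c * bernoulliWeight ν c) :=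
        sum_sqrt_prod_mul_prod (fun j => bernoulliWeight (lam j)) (fun _ => bernoulliWeight ν)
          fun j c => mul_nonneg (bernoulliWeight_nonneg (hlam0 j) (hlam_le j) c)
            (bernoulliWeight_nonneg hν (hν_le j) c)
    _ ≤ ∏ j, exp (-(lam j - ν) ^ 2 / 2) :=
        prod_le_prod (fun _ _ => sum_nonneg fun _ _ => sqrt_nonneg _) fun j _ =>
          sum_sqrt_bernoulliWeight_mul_le (hlam0 j) (hlam_le j) hν (hν_le j)
    _ = exp (-(1 / 2) * ∑ j, (lam j - ν) ^ 2) := by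
        rw [← exp_sum, mul_sum]
        exact congrArg exp (sum_congr rfl fun j _ => by ring)
end
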